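/- Let r > 3, f = g + h with g ∈ F_L and h : ℝⁿ → ℝ convex, and suppose f attains its minimum f⋆ at x⋆. Let 0 < s ≤ 1/L and let the generalized Nesterov scheme produce (x_k, y_k) from y₀ = x₀: x_k is the minimizer of z ↦ ‖z − (y_{k−1} − s∇g(y_{k−1}))‖²/(2s) + h(z) and y_k = x_k + ((k−1)/(k+r−1))(x_k − x_{k−1}). Then for every k ≥ 1, f(x_k) − f⋆ ≤ (r−1)²‖x₀ − x⋆‖²/(2s(k+r−2)²), and moreover Σ_{k=1}^∞ (k+r−1)(f(x_k) − f⋆) ≤ (r−1)²‖x₀ − x⋆‖²/(2s(r−3)). -/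

import Mathlib

/-!
Discrete Lyapunov argument. Put `τ_k = (k + r - 1)/(r - 1)` and `z_k = y_k + (τ_k - 1)(y_k - x_k)`;
the momentum update says exactly that `z_{k+1} = z_k - τ_k (y_k - x_{k+1})`. Adding the
proximal-gradient inequality `f(x_{k+1}) ≤ f(z) + ⟪G, y_k - z⟫ - s‖G‖²/2`, `G = (y_k - x_{k+1})/s`,
at `z = x_k` and at `z = x⋆` with weights `τ_k - 1` and `1` shows that the energy
`E_k = 2sτ_k²(f(x_{k+1}) - f⋆) + ‖z_{k+1} - x⋆‖²` satisfies `E_0 ≤ ‖x₀ - x⋆‖²` and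
`E_{k+1} + 2s(r - 3)(k + r)/(r - 1)² (f(x_{k+1}) - f⋆) ≤ E_k`. Telescoping bounds the weighted
sum of the gaps, and `2sτ_{k-1}²(f(x_k) - f⋆) ≤ E_{k-1}` gives the rate.
-/

open Set Filter Topology

noncomputable section

abbrev E (n : ℕ) := EuclideanSpace ℝ (Fin n)

def MemFL (n : ℕ) (L : ℝ) (g : E n → ℝ) : Prop :=
  ConvexOn ℝ Set.univ g ∧ ContDiff ℝ 1 g ∧
    ∀ x y, ‖gradient g x - gradient g y‖ ≤ L * ‖x - y‖

/-- The generalized (proximal) Nesterov scheme with parameter `r` and step size `s` for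
`f = g + h`: `y₀ = x₀`, and for `k ≥ 1`, `x_k` minimizes
`z ↦ ‖z - (y_{k-1} - s ∇g(y_{k-1}))‖²/(2s) + h(z)` and
`y_k = x_k + ((k-1)/(k+r-1)) (x_k - x_{k-1})`. -/
def GenProxNesterov (n : ℕ) (g h : E n → ℝ) (s r : ℝ) (x0 : E n) (x y : ℕ → E n) : Prop :=
  x 0 = x0 ∧ y 0 = x0 ∧
  ∀ k : ℕ,
    IsMinOn (fun z => ‖z - (y k - s • gradient g (y k))‖ ^ 2 / (2 * s) + h z)
      Set.univ (x (k + 1)) ∧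
    y (k + 1) = x (k + 1) + ((k : ℝ) / ((k : ℝ) + r)) • (x (k + 1) - x k)

open scoped RealInnerProductSpace

section Gradient

variable {F : Type*} [NormedAddCommGroup F] [InnerProductSpace ℝ F] [CompleteSpace F]
  {g : F → ℝ}

lemma hasDerivAt_comp_add_smul {y v : F} {t : ℝ} (hg : DifferentiableAt ℝ g (y + t • v)) :
    HasDerivAt (fun t : ℝ => g (y + t • v)) ⟪gradient g (y + t • v), v⟫ t := by
  have hline : HasDerivAt (fun t : ℝ => y + t • v) v t := by
    simpa using ((hasDerivAt_id t).smul_const v).const_add y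
  simpa [Function.comp_def] using
    (hasGradientAt_iff_hasFDerivAt.mp hg.hasGradientAt).comp_hasDerivAt t hline

lemma ConvexOn.add_inner_gradient_le (hconv : ConvexOn ℝ univ g) {y : F}
    (hg : DifferentiableAt ℝ g y) (z : F) : g y + ⟪gradient g y, z - y⟫ ≤ g z := by
  have hline : ConvexOn ℝ univ (fun t : ℝ => g (y + t • (z - y))) := by
    simpa [Function.comp_def, AffineMap.lineMap_apply, add_comm] using
      hconv.comp_affineMap (AffineMap.lineMap y z)
  have hder := hasDerivAt_comp_add_smul (v := z - y) (t := 0) (by simpa using hg)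
  rw [zero_smul, add_zero] at hder
  have := hline.le_slope_of_hasDerivAt (mem_univ 0) (mem_univ 1) one_pos hder
  simp only [slope_def_field, one_smul, zero_smul, add_zero, add_sub_cancel, sub_zero,
    div_one] at this
  linarith

lemma le_add_inner_gradient_add_sq_norm {L : ℝ} (hg : Differentiable ℝ g)
    (hLip : ∀ a b, ‖gradient g a - gradient g b‖ ≤ L * ‖a - b‖) (y z : F) :
    g z ≤ g y + ⟪gradient g y, z - y⟫ + L / 2 * ‖z - y‖ ^ 2 := by
  set v := z - y
  let ψ : ℝ → ℝ := fun t => g (y + t • v) - t * ⟪gradient g y, v⟫ - L * ‖v‖ ^ 2 * t ^ 2 / 2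
  have hψ : ∀ t, HasDerivAt ψ
      (⟪gradient g (y + t • v) - gradient g y, v⟫ - L * ‖v‖ ^ 2 * t) t := by
    intro t
    refine (((hasDerivAt_comp_add_smul (hg _)).sub
      ((hasDerivAt_id t).mul_const ⟪gradient g y, v⟫)).sub
      (((hasDerivAt_pow 2 t).const_mul (L * ‖v‖ ^ 2)).div_const 2)).congr_deriv ?_
    rw [inner_sub_left]
    push_cast
    ring
  have hanti : AntitoneOn ψ (Icc 0 1) := by
    refine antitoneOn_of_hasDerivWithinAt_nonpos (convex_Icc 0 1)
      (fun t _ => (hψ t).continuousAt.continuousWithinAt) (fun t _ => (hψ t).hasDerivWithinAt) ?_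
    intro t ht
    rw [interior_Icc] at ht
    have := calc ⟪gradient g (y + t • v) - gradient g y, v⟫
        ≤ ‖gradient g (y + t • v) - gradient g y‖ * ‖v‖ := real_inner_le_norm _ _
      _ ≤ L * ‖t • v‖ * ‖v‖ := by gcongr; simpa using hLip (y + t • v) y
      _ = L * ‖v‖ ^ 2 * t := by rw [norm_smul, Real.norm_of_nonneg ht.1.le]; ring
    linarith
  have := hanti (left_mem_Icc.2 zero_le_one) (right_mem_Icc.2 zero_le_one) zero_le_one
  simp only [ψ, v, one_smul, zero_smul, add_zero, add_sub_cancel, zero_mul, one_mul,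
    one_pow, sub_zero] at this
  linarith

end Gradient

lemma le_of_forall_mem_Ioc_le_add_mul {a b c : ℝ} (h : ∀ t ∈ Ioc (0 : ℝ) 1, a ≤ b + t * c) :
    a ≤ b := by
  have hlim : Tendsto (fun t => b + t * c) (𝓝[>] 0) (𝓝 b) := by
    have : Tendsto (fun t : ℝ => b + t * c) (𝓝 0) (𝓝 (b + 0 * c)) :=
      (continuous_const.add (continuous_id.mul continuous_const)).tendsto 0
    simpa using this.mono_left nhdsWithin_le_nhds
  exact ge_of_tendsto hlim (eventually_of_mem (Ioc_mem_nhdsGT one_pos) h)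

lemma add_sum_range_le_of_succ_add_le {e c : ℕ → ℝ} (h : ∀ k, e (k + 1) + c k ≤ e k)
    (m : ℕ) : e m + ∑ k ∈ Finset.range m, c k ≤ e 0 := by
  induction m with
  | zero => simp
  | succ m ih => rw [Finset.sum_range_succ]; linarith [h m]

lemma weighted_gap_nonneg {α : Type*} {f : α → ℝ} {r : ℝ} {x : ℕ → α} {xstar : α}
    (hr : 0 ≤ r) (hmin : IsMinOn f univ xstar) (k : ℕ) :
    0 ≤ ((k : ℝ) + r) * (f (x (k + 1)) - f xstar) :=
  mul_nonneg (by positivity) (sub_nonneg.2 (hmin (mem_univ _)))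

section Prox

variable {F : Type*} [NormedAddCommGroup F] [InnerProductSpace ℝ F]

lemma ConvexOn.inner_sub_le_of_isMinOn_prox {h : F → ℝ} {s : ℝ} (hh : ConvexOn ℝ univ h)
    (hs : 0 < s) {u p : F} (hp : IsMinOn (fun z => ‖z - u‖ ^ 2 / (2 * s) + h z) univ p)
    (z : F) : ⟪u - p, z - p⟫ ≤ s * (h z - h p) := by
  refine le_of_forall_mem_Ioc_le_add_mul (c := ‖z - p‖ ^ 2 / 2) fun t ⟨ht0, ht1⟩ => ?_
  have hmin : ‖p - u‖ ^ 2 / (2 * s) + h p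
      ≤ ‖p + t • (z - p) - u‖ ^ 2 / (2 * s) + h (p + t • (z - p)) := hp (mem_univ _)
  have hconv : h (p + t • (z - p)) ≤ (1 - t) * h p + t * h z := by
    have := hh.2 (mem_univ p) (mem_univ z) (sub_nonneg.2 ht1) ht0.le (sub_add_cancel 1 t)
    rwa [show (1 - t) • p + t • z = p + t • (z - p) by module] at this
  have hnorm : ‖p + t • (z - p) - u‖ ^ 2
      = ‖p - u‖ ^ 2 - 2 * t * ⟪u - p, z - p⟫ + t ^ 2 * ‖z - p‖ ^ 2 := by
    rw [show p + t • (z - p) - u = (p - u) + t • (z - p) by abel, norm_add_sq_real,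
      real_inner_smul_right, norm_smul, Real.norm_of_nonneg ht0.le,
      show p - u = -(u - p) by abel, inner_neg_left, norm_neg]
    ring
  rw [hnorm] at hmin
  have hscaled : t * ⟪u - p, z - p⟫ ≤ t * (s * (h z - h p) + t * (‖z - p‖ ^ 2 / 2)) := by
    field_simp at hmin
    nlinarith
  exact le_of_mul_le_mul_left hscaled ht0

def IsProxGradStep [CompleteSpace F] (g h : F → ℝ) (s : ℝ) (y p : F) : Prop :=
  IsMinOn (fun z => ‖z - (y - s • gradient g y)‖ ^ 2 / (2 * s) + h z) univ p

lemma IsProxGradStep.two_mul_sub_le [CompleteSpace F] {g h : F → ℝ} {L s : ℝ} {y p : F}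
    (hp : IsProxGradStep g h s y p) (hgc : ConvexOn ℝ univ g) (hgd : Differentiable ℝ g)
    (hLip : ∀ a b, ‖gradient g a - gradient g b‖ ≤ L * ‖a - b‖) (hh : ConvexOn ℝ univ h)
    (hs : 0 < s) (hLs : L * s ≤ 1) (z : F) :
    2 * s * (g p + h p - (g z + h z)) ≤ 2 * ⟪y - p, y - z⟫ - ‖y - p‖ ^ 2 := by
  have hdesc := le_add_inner_gradient_add_sq_norm hgd hLip y p
  have hsupp := hgc.add_inner_gradient_le (hgd y) z
  have hprox := hh.inner_sub_le_of_isMinOn_prox hs hp z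
  set G := gradient g y
  have hcurv : s * (L * ‖y - p‖ ^ 2) ≤ ‖y - p‖ ^ 2 := by
    nlinarith [sq_nonneg ‖y - p‖]
  have hG : ⟪G, p - y⟫ - ⟪G, z - y⟫ + ⟪G, z - p⟫ = 0 := by
    simp only [inner_sub_right]; ring
  have hprox_inner : ⟪y - s • G - p, z - p⟫ = ⟪y - p, z - p⟫ - s * ⟪G, z - p⟫ := by
    rw [show y - s • G - p = (y - p) - s • G by abel, inner_sub_left, real_inner_smul_left]
  have hsplit : ⟪y - p, y - z⟫ + ⟪y - p, z - p⟫ = ‖y - p‖ ^ 2 := by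
    rw [← inner_add_right, sub_add_sub_cancel, real_inner_self_eq_norm_sq]
  rw [norm_sub_rev] at hdesc
  linear_combination 2 * s * hdesc + 2 * s * hsupp + 2 * hprox + hcurv - 2 * hprox_inner
    + 2 * s * hG - 2 * hsplit

lemma lyapunov_step {f : F → ℝ} {s A : ℝ} (hA : 0 ≤ A) {y p : F}
    (hfund : ∀ z, 2 * s * (f p - f z) ≤ 2 * ⟪y - p, y - z⟫ - ‖y - p‖ ^ 2) (u xstar : F) :
    2 * s * (A + 1) ^ 2 * (f p - f xstar) + ‖y + A • (y - u) - (A + 1) • (y - p) - xstar‖ ^ 2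
      ≤ 2 * s * (A + 1) * A * (f u - f xstar) + ‖y + A • (y - u) - xstar‖ ^ 2 := by
  have hinner : ⟪y + A • (y - u) - xstar, y - p⟫ = ⟪y - p, y - xstar⟫ + A * ⟪y - p, y - u⟫ := by
    rw [show y + A • (y - u) - xstar = (y - xstar) + A • (y - u) by abel, inner_add_left,
      real_inner_smul_left, real_inner_comm, real_inner_comm (y - u)]
  rw [show y + A • (y - u) - (A + 1) • (y - p) - xstar
      = (y + A • (y - u) - xstar) - (A + 1) • (y - p) by abel, norm_sub_sq_real,
    real_inner_smul_right, hinner, norm_smul, mul_pow, Real.norm_eq_abs, sq_abs]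
  linear_combination (A + 1) * A * hfund u + (A + 1) * hfund xstar

end Prox

section Nesterov

variable {F : Type*} [NormedAddCommGroup F] [InnerProductSpace ℝ F]
  {f : F → ℝ} {s r : ℝ} {x y : ℕ → F} {xstar : F}

structure NesterovDescent (f : F → ℝ) (s r : ℝ) (x y : ℕ → F) : Prop where
  momentum : ∀ k : ℕ, y (k + 1) = x (k + 1) + ((k : ℝ) / ((k : ℝ) + r)) • (x (k + 1) - x k)
  descent : ∀ (k : ℕ) (z : F),
    2 * s * (f (x (k + 1)) - f z) ≤ 2 * ⟪y k - x (k + 1), y k - z⟫ - ‖y k - x (k + 1)‖ ^ 2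

def nesterovZ (r : ℝ) (x y : ℕ → F) (k : ℕ) : F := y k + ((k : ℝ) / (r - 1)) • (y k - x k)

def nesterovEnergy (f : F → ℝ) (s r : ℝ) (x y : ℕ → F) (xstar : F) (k : ℕ) : ℝ :=
  2 * s * ((k : ℝ) / (r - 1) + 1) ^ 2 * (f (x (k + 1)) - f xstar) +
    ‖nesterovZ r x y (k + 1) - xstar‖ ^ 2

lemma nesterovZ_succ (hr : 1 < r) {k : ℕ}
    (hy : y (k + 1) = x (k + 1) + ((k : ℝ) / ((k : ℝ) + r)) • (x (k + 1) - x k)) :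
    nesterovZ r x y (k + 1)
      = y k + ((k : ℝ) / (r - 1)) • (y k - x k) - ((k : ℝ) / (r - 1) + 1) • (y k - x (k + 1)) := by
  have hr1 : r - 1 ≠ 0 := by linarith
  have hkr : (k : ℝ) + r ≠ 0 := by positivity
  simp only [nesterovZ, hy]
  push_cast
  match_scalars <;> field_simp <;> ring

namespace NesterovDescent

lemma energy_le (hN : NesterovDescent f s r x y) (hr : 1 < r) (k : ℕ) :
    nesterovEnergy f s r x y xstar k ≤
      2 * s * ((k : ℝ) / (r - 1) + 1) * ((k : ℝ) / (r - 1)) * (f (x k) - f xstar) +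
        ‖nesterovZ r x y k - xstar‖ ^ 2 := by
  rw [nesterovEnergy, nesterovZ_succ hr (hN.momentum k)]
  exact lyapunov_step (div_nonneg k.cast_nonneg (by linarith)) (hN.descent k) _ _

lemma energy_zero_le (hN : NesterovDescent f s r x y) (hr : 1 < r) :
    nesterovEnergy f s r x y xstar 0 ≤ ‖y 0 - xstar‖ ^ 2 := by
  simpa [nesterovZ] using hN.energy_le (xstar := xstar) hr 0

lemma energy_succ_add_le (hN : NesterovDescent f s r x y) (hr : 1 < r) (hs : 0 ≤ s)
    (hmin : IsMinOn f univ xstar) (k : ℕ) :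
    nesterovEnergy f s r x y xstar (k + 1) +
        2 * s * (r - 3) / (r - 1) ^ 2 * (((k : ℝ) + r) * (f (x (k + 1)) - f xstar)) ≤
      nesterovEnergy f s r x y xstar k := by
  have hstep := hN.energy_le (xstar := xstar) hr (k + 1)
  have hcoeff : ((k + 1 : ℕ) / (r - 1) + 1) * ((k + 1 : ℕ) / (r - 1)) +
      (r - 3) / (r - 1) ^ 2 * ((k : ℝ) + r) + 1 / (r - 1) ^ 2 = ((k : ℝ) / (r - 1) + 1) ^ 2 := by
    have : r - 1 ≠ 0 := by linarith
    push_cast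
    field_simp
    ring
  have hdrop : 0 ≤ 2 * s * (1 / (r - 1) ^ 2) * (f (x (k + 1)) - f xstar) :=
    mul_nonneg (mul_nonneg (by positivity) (by positivity)) (sub_nonneg.2 (hmin (mem_univ _)))
  unfold nesterovEnergy at hstep ⊢
  linear_combination hstep + hdrop + 2 * s * (f (x (k + 1)) - f xstar) * hcoeff

lemma energy_add_sum_le (hN : NesterovDescent f s r x y) (hr : 1 < r) (hs : 0 ≤ s)
    (hmin : IsMinOn f univ xstar) (m : ℕ) :
    nesterovEnergy f s r x y xstar m + 2 * s * (r - 3) / (r - 1) ^ 2 *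
        ∑ k ∈ Finset.range m, ((k : ℝ) + r) * (f (x (k + 1)) - f xstar) ≤ ‖y 0 - xstar‖ ^ 2 := by
  rw [Finset.mul_sum]
  exact (add_sum_range_le_of_succ_add_le (hN.energy_succ_add_le hr hs hmin) m).trans
    (hN.energy_zero_le hr)

lemma sub_le (hN : NesterovDescent f s r x y) (hr : 3 ≤ r) (hs : 0 < s)
    (hmin : IsMinOn f univ xstar) {k : ℕ} (hk : 1 ≤ k) :
    f (x k) - f xstar ≤ (r - 1) ^ 2 * ‖y 0 - xstar‖ ^ 2 / (2 * s * ((k : ℝ) + r - 2) ^ 2) := by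
  obtain ⟨m, rfl⟩ := Nat.exists_eq_add_of_le' hk
  have hbound := hN.energy_add_sum_le (by linarith) hs.le hmin m
  have hsum : 0 ≤ 2 * s * (r - 3) / (r - 1) ^ 2 *
      ∑ k ∈ Finset.range m, ((k : ℝ) + r) * (f (x (k + 1)) - f xstar) := by
    refine mul_nonneg (div_nonneg (mul_nonneg (by positivity) (by linarith)) (sq_nonneg _))
      (Finset.sum_nonneg fun k _ => weighted_gap_nonneg (by linarith) hmin k)
  have hcoeff : 2 * s * ((m : ℝ) / (r - 1) + 1) ^ 2 * (r - 1) ^ 2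
      = 2 * s * (((m + 1 : ℕ) : ℝ) + r - 2) ^ 2 := by
    have : r - 1 ≠ 0 := by linarith
    push_cast
    field_simp
    ring
  have hden : 0 < 2 * s * (((m + 1 : ℕ) : ℝ) + r - 2) ^ 2 :=
    mul_pos (by positivity) (pow_pos (by push_cast; linarith) 2)
  have henergy : 2 * s * ((m : ℝ) / (r - 1) + 1) ^ 2 * (f (x (m + 1)) - f xstar)
      ≤ ‖y 0 - xstar‖ ^ 2 := by
    unfold nesterovEnergy at hbound
    linarith [sq_nonneg ‖nesterovZ r x y (m + 1) - xstar‖]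
  rw [le_div_iff₀ hden, ← hcoeff]
  linarith [mul_le_mul_of_nonneg_right henergy (sq_nonneg (r - 1))]

lemma sum_range_le (hN : NesterovDescent f s r x y) (hr : 3 < r) (hs : 0 < s)
    (hmin : IsMinOn f univ xstar) (m : ℕ) :
    ∑ k ∈ Finset.range m, ((k : ℝ) + r) * (f (x (k + 1)) - f xstar) ≤
      (r - 1) ^ 2 * ‖y 0 - xstar‖ ^ 2 / (2 * s * (r - 3)) := by
  set S := ∑ k ∈ Finset.range m, ((k : ℝ) + r) * (f (x (k + 1)) - f xstar)
  have hbound := hN.energy_add_sum_le (by linarith) hs.le hmin m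
  have henergy : 0 ≤ nesterovEnergy f s r x y xstar m :=
    add_nonneg (mul_nonneg (by positivity) (sub_nonneg.2 (hmin (mem_univ _)))) (sq_nonneg _)
  have hr1 : r - 1 ≠ 0 := by linarith
  rw [le_div_iff₀ (mul_pos (by positivity) (by linarith))]
  calc S * (2 * s * (r - 3)) = 2 * s * (r - 3) / (r - 1) ^ 2 * S * (r - 1) ^ 2 := by
        field_simp
    _ ≤ ‖y 0 - xstar‖ ^ 2 * (r - 1) ^ 2 := by gcongr; linarith
    _ = (r - 1) ^ 2 * ‖y 0 - xstar‖ ^ 2 := mul_comm _ _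

end NesterovDescent

end Nesterov

theorem gen_scheme_high_friction_general (n : ℕ) (r : ℝ) (hr : 3 < r) (L : ℝ)
    (g h : E n → ℝ) (hg : MemFL n L g) (hh : ConvexOn ℝ Set.univ h)
    (xstar : E n) (hmin : IsMinOn (fun x => g x + h x) Set.univ xstar)
    (s : ℝ) (hs : 0 < s) (hsL : s ≤ 1 / L)
    (x0 : E n) (x y : ℕ → E n) (hxy : GenProxNesterov n g h s r x0 x y) :
    (∀ k : ℕ, 1 ≤ k →
      (g (x k) + h (x k)) - (g xstar + h xstar) ≤
        (r - 1) ^ 2 * ‖x0 - xstar‖ ^ 2 / (2 * s * ((k : ℝ) + r - 2) ^ 2)) ∧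
    Summable (fun k : ℕ =>
      ((k : ℝ) + r) * ((g (x (k + 1)) + h (x (k + 1))) - (g xstar + h xstar))) ∧
    ∑' k : ℕ, ((k : ℝ) + r) * ((g (x (k + 1)) + h (x (k + 1))) - (g xstar + h xstar)) ≤
      (r - 1) ^ 2 * ‖x0 - xstar‖ ^ 2 / (2 * s * (r - 3)) := by
  obtain ⟨-, rfl, hstep⟩ := hxy
  obtain ⟨hgc, hgd, hLip⟩ := hg
  have hLs : L * s ≤ 1 := by
    have hL : 0 < L := one_div_pos.mp (hs.trans_le hsL)
    rwa [le_div_iff₀ hL, mul_comm] at hsL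
  have hN : NesterovDescent (fun z => g z + h z) s r x y :=
    ⟨fun k => (hstep k).2, fun k => IsProxGradStep.two_mul_sub_le (hstep k).1 hgc
      (hgd.differentiable one_ne_zero) hLip hh hs hLs⟩
  have hsum := hN.sum_range_le hr hs hmin
  have hnonneg := weighted_gap_nonneg (x := x) (by linarith : (0 : ℝ) ≤ r) hmin
  exact ⟨fun k hk => hN.sub_le hr.le hs hmin hk, summable_of_sum_range_le hnonneg hsum,
    Real.tsum_le_of_sum_range_le hnonneg hsum⟩

/-- **Theorem 6 (high friction, discrete time).** For `r > 3`, `f = g + h` with `g ∈ F_L`,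
`h` convex, and step size `0 < s ≤ 1/L`, the generalized Nesterov scheme satisfies
`f(x_k) - f⋆ ≤ (r-1)²‖x₀-x⋆‖²/(2s(k+r-2)²)` and
`Σ_{k≥1} (k+r-1)(f(x_k) - f⋆) ≤ (r-1)²‖x₀-x⋆‖²/(2s(r-3))`. -/
theorem gen_scheme_high_friction (n : ℕ) (r : ℝ) (hr : 3 < r) (L : ℝ) (hL : 0 < L)
    (g h : E n → ℝ) (hg : MemFL n L g) (hh : ConvexOn ℝ Set.univ h)
    (xstar : E n) (hmin : IsMinOn (fun x => g x + h x) Set.univ xstar)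
    (s : ℝ) (hs : 0 < s) (hsL : s ≤ 1 / L)
    (x0 : E n) (x y : ℕ → E n) (hxy : GenProxNesterov n g h s r x0 x y) :
    (∀ k : ℕ, 1 ≤ k →
      (g (x k) + h (x k)) - (g xstar + h xstar) ≤
        (r - 1) ^ 2 * ‖x0 - xstar‖ ^ 2 / (2 * s * ((k : ℝ) + r - 2) ^ 2)) ∧
    Summable (fun k : ℕ =>
      ((k : ℝ) + r) * ((g (x (k + 1)) + h (x (k + 1))) - (g xstar + h xstar))) ∧
    ∑' k : ℕ, ((k : ℝ) + r) * ((g (x (k + 1)) + h (x (k + 1))) - (g xstar + h xstar)) ≤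
      (r - 1) ^ 2 * ‖x0 - xstar‖ ^ 2 / (2 * s * (r - 3)) :=
  gen_scheme_high_friction_general n r hr L g h hg hh xstar hmin s hs hsL x0 x y hxy
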